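/- PBW degrees of the standard basis of fundamental 𝔰𝔩_n-modules: let n ≥ 2, 1 ≤ k ≤ n, let 𝔤 = 𝔰𝔩_n(ℂ) act on M = ⋀^k ℂ^n by derivations (X·(v₁∧⋯∧v_k) = Σ_i v₁∧⋯∧Xv_i∧⋯∧v_k), let 𝔫⁻ ⊂ 𝔤 be the strictly lower triangular matrices, and let v = e₁∧⋯∧e_k. For every subset J = {j₁ < ⋯ < j_k} ⊆ {1,…,n}, the vector e_J = e_{j₁}∧⋯∧e_{j_k} lies in F_d but not in F_{d−1} of the PBW filtration of M generated by v, where d = #{j ∈ J : j > k} (with F_{−1} = 0). -/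

import Mathlib

/-!
Write `e_c = e_{c 0} ∧ ⋯ ∧ e_{c (k-1)}` and count the entries `c i ≥ k` (0-based), i.e. the
entries outside the support of `v = e_0 ∧ ⋯ ∧ e_{k-1}`.

If `c i ≥ k` and `b < k` is missing from `c`, the lower triangular elementary matrix `E_{c i, b}`
sends `e_{c'}` to `e_c`, where `c'` replaces `c i` by `b`; so `d` such steps lead from `v`
(up to sign) to `e_J`, and `e_J ∈ F_d`.

Conversely, any matrix `X` sends `e_c` to a combination of the `e_{c'}` with `c'` differing
from `c` in one entry, so `F_s` lies in the span of the `e_c` with at most `s` entries `≥ k`.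
The coordinate of `e_J` in the standard basis of `⋀^k ℂ^n` (the `J`-minor) vanishes on that
span when `s < d`, whence `e_J ∉ F_s`.
-/

/-- The PBW filtration on a module `M` generated by a vector `v`, with respect to
a set `S` of linear operators (the action of a Lie subalgebra `𝔫⁻`):
`F 0 = span {v}`, `F (s+1) = F s + span {T u : T ∈ S, u ∈ F s}`. -/
def pbwFiltration {R M : Type*} [CommRing R] [AddCommGroup M] [Module R M]
    (S : Set (Module.End R M)) (v : M) : ℕ → Submodule R M
  | 0 => Submodule.span R {v}
  | s + 1 => pbwFiltration S v s ⊔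
      Submodule.span R {u | ∃ T ∈ S, ∃ m ∈ pbwFiltration S v s, u = T m}

/-- `v₁ ∧ ⋯ ∧ v_k` as an element of the exterior power `⋀^k ℂ^n`. -/
noncomputable def wedge (n k : ℕ) (v : Fin k → (Fin n → ℂ)) :
    ⋀[ℂ]^k (Fin n → ℂ) :=
  ⟨ExteriorAlgebra.ιMulti ℂ k v,
    ExteriorAlgebra.ιMulti_range ℂ k (Set.mem_range_self v)⟩

/-- The operators on `⋀^k ℂ^n` given by the derivation action
`X·(v₁∧⋯∧v_k) = Σ_i v₁∧⋯∧Xv_i∧⋯∧v_k` of a strictly lower triangular matrix `X`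
(these are exactly the elements of `𝔫⁻ ⊂ 𝔰𝔩_n(ℂ)`). -/
def lowerTriangularDerivations (n k : ℕ) :
    Set (Module.End ℂ (⋀[ℂ]^k (Fin n → ℂ))) :=
  {T | ∃ X : Matrix (Fin n) (Fin n) ℂ,
    (∀ i j : Fin n, i ≤ j → X i j = 0) ∧
    ∀ v : Fin k → (Fin n → ℂ),
      T (wedge n k v) = ∑ i : Fin k, wedge n k (Function.update v i (X.mulVec (v i)))}

open Function Finset

theorem Function.Injective.update_of_notMem_range {α β : Type*} [DecidableEq α] {f : α → β}
    (hf : Injective f) (i : α) {b : β} (hb : b ∉ Set.range f) : Injective (update f i b) := by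
  intro x y h
  by_cases hx : x = i <;> by_cases hy : y = i <;>
    simp only [update_apply, hx, hy, if_true, if_false] at h
  · exact hx.trans hy.symm
  · exact absurd ⟨y, h.symm⟩ hb
  · exact absurd ⟨x, h⟩ hb
  · exact hf h

theorem AlternatingMap.map_comp_mem_span_singleton_of_range_eq {R M N ι ι' : Type*}
    [CommRing R] [AddCommGroup M] [Module R M] [AddCommGroup N] [Module R N]
    [Fintype ι] [DecidableEq ι] (f : M [⋀^ι]→ₗ[R] N) (v : ι' → M) {c c' : ι → ι'}
    (hc : Injective c) (hc' : Injective c') (h : Set.range c = Set.range c') :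
    f (v ∘ c) ∈ R ∙ f (v ∘ c') := by
  let σ : Equiv.Perm ι := (Equiv.ofInjective c hc).trans
    ((Equiv.setCongr h).trans (Equiv.ofInjective c' hc').symm)
  have hσ : c' ∘ σ = c := by
    ext i
    simp [σ, Equiv.apply_ofInjective_symm]
  rw [← hσ, ← comp_assoc, f.map_perm, Units.smul_def]
  exact Submodule.smul_of_tower_mem _ _ (Submodule.mem_span_singleton_self _)

namespace exteriorPower

variable {R M : Type*} [CommRing R] [AddCommGroup M] [Module R M] {k : ℕ}

theorem sum_ιMulti_update_apply_eq_zero (f : Module.End R M) {v : Fin k → M} {i j : Fin k}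
    (hv : v i = v j) (hij : i ≠ j) :
    ∑ m, ιMulti R k (update v m (f (v m))) = 0 := by
  rw [Fintype.sum_eq_add i j hij fun m ⟨hmi, hmj⟩ => (ιMulti R k).map_eq_zero_of_eq _
    (by rwa [update_of_ne hmi.symm, update_of_ne hmj.symm]) hij]
  have hswap : update v j (f (v j)) = update v i (f (v i)) ∘ Equiv.swap i j := by
    ext a
    rcases eq_or_ne a i with rfl | hai
    · simp [hij, hij.symm, hv]
    rcases eq_or_ne a j with rfl | haj
    · simp [hv]
    · simp [Equiv.swap_apply_of_ne_of_ne hai haj, hai, haj]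
  rw [hswap, AlternatingMap.map_swap _ _ hij, add_neg_cancel]

noncomputable def derivationMultilinearMap (k : ℕ) (f : Module.End R M) :
    MultilinearMap R (fun _ : Fin k => M) (⋀[R]^k M) :=
  ∑ m, (ιMulti R k).toMultilinearMap.compLinearMap (update (fun _ => LinearMap.id) m f)

theorem derivationMultilinearMap_apply (f : Module.End R M) (v : Fin k → M) :
    derivationMultilinearMap k f v = ∑ m, ιMulti R k (update v m (f (v m))) := by
  simp only [derivationMultilinearMap, _root_.sum_apply,
    MultilinearMap.compLinearMap_apply, AlternatingMap.coe_multilinearMap]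
  congr! 2 with m
  ext a
  rcases eq_or_ne a m with rfl | h <;> simp [*]

noncomputable def derivationEnd (k : ℕ) (f : Module.End R M) : Module.End R (⋀[R]^k M) :=
  alternatingMapLinearEquiv
    { derivationMultilinearMap k f with
      map_eq_zero_of_eq' := fun v _ _ hv hij =>
        (derivationMultilinearMap_apply f v).trans (sum_ιMulti_update_apply_eq_zero f hv hij) }

theorem derivationEnd_ιMulti (f : Module.End R M) (v : Fin k → M) :
    derivationEnd k f (ιMulti R k v) = ∑ m, ιMulti R k (update v m (f (v m))) := by
  rw [derivationEnd, alternatingMapLinearEquiv_apply_ιMulti]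
  exact derivationMultilinearMap_apply f v

theorem derivationEnd_ιMulti_of_apply_eq_zero {f : Module.End R M} {v : Fin k → M} {i : Fin k}
    (hf : ∀ m ≠ i, f (v m) = 0) :
    derivationEnd k f (ιMulti R k v) = ιMulti R k (update v i (f (v i))) := by
  rw [derivationEnd_ιMulti, Fintype.sum_eq_single i fun m hm =>
    (ιMulti R k).map_coord_zero m (by rw [update_self, hf m hm])]

theorem ιMultiDual_apply_ιMulti_comp_eq_zero {I : Type*} [LinearOrder I] (b : Module.Basis I R M)
    (s : Set.powersetCard I k) {c : Fin k → I} (hc : univ.image c ≠ s.val) :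
    ιMultiDual R k b s (ιMulti R k (b ∘ c)) = 0 := by
  by_cases hinj : Injective c
  · obtain ⟨i, hi⟩ : ∃ i, c i ∉ s.val := by
      by_contra! hall
      refine hc (eq_of_subset_of_card_le (fun j hj => ?_) ?_)
      · obtain ⟨i, -, rfl⟩ := mem_image.mp hj
        exact hall i
      · rw [card_image_of_injective _ hinj, card_univ, Fintype.card_fin, s.prop]
    rw [ιMultiDual_apply_ιMulti]
    refine Matrix.det_eq_zero_of_row_eq_zero i fun j => ?_
    simp only [Matrix.of_apply, comp_apply, Module.Basis.coord_apply, Module.Basis.repr_self]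
    refine Finsupp.single_eq_of_ne fun h => hi ?_
    exact h ▸ (Set.powersetCard.mem_range_ofFinEmbEquiv_symm_iff_mem s _).mp ⟨j, rfl⟩
  · rw [AlternatingMap.map_eq_zero_of_not_injective _ _ fun h => hinj (h.of_comp), map_zero]

end exteriorPower

section PBW

variable {R M : Type*} [CommRing R] [AddCommGroup M] [Module R M]
  {S : Set (Module.End R M)} {v : M}

theorem pbwFiltration_zero (S : Set (Module.End R M)) (v : M) : pbwFiltration S v 0 = R ∙ v :=
  rfl

theorem apply_mem_pbwFiltration_succ {T : Module.End R M} (hT : T ∈ S) {s : ℕ} {x : M}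
    (hx : x ∈ pbwFiltration S v s) : T x ∈ pbwFiltration S v (s + 1) :=
  Submodule.mem_sup_right (Submodule.subset_span ⟨T, hT, x, hx, rfl⟩)

theorem pbwFiltration_le {W : ℕ → Submodule R M} (hW : Monotone W) (hv : v ∈ W 0)
    (hS : ∀ T ∈ S, ∀ s, W s ≤ (W (s + 1)).comap T) (s : ℕ) :
    pbwFiltration S v s ≤ W s := by
  induction s with
  | zero =>
    exact (pbwFiltration_zero S v).le.trans ((Submodule.span_singleton_le_iff_mem _ _).mpr hv)
  | succ s ih =>
    refine sup_le (ih.trans (hW s.le_succ)) (Submodule.span_le.mpr ?_)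
    rintro _ ⟨T, hT, x, hx, rfl⟩
    exact hS T hT s (ih hx)

end PBW

section numGe

variable {ι : Type*} [Fintype ι] {n : ℕ}

def numGe (m : ℕ) (c : ι → Fin n) : ℕ := #{i | m ≤ (c i : ℕ)}

theorem numGe_update_le [DecidableEq ι] (m : ℕ) (c : ι → Fin n) (i : ι) (a : Fin n) :
    numGe m (update c i a) ≤ numGe m c + 1 := by
  refine (card_le_card fun j hj => ?_).trans (card_insert_le i _)
  rcases eq_or_ne j i with rfl | h
  · exact mem_insert_self _ _
  · simpa [h] using hj

theorem numGe_update_add_one [DecidableEq ι] {m : ℕ} {c : ι → Fin n} {i : ι} {a : Fin n}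
    (hci : m ≤ (c i : ℕ)) (ha : (a : ℕ) < m) :
    numGe m (update c i a) + 1 = numGe m c := by
  have : ({j | m ≤ (update c i a j : ℕ)} : Finset ι) =
      ({j | m ≤ (c j : ℕ)} : Finset ι).erase i := by
    ext j
    rcases eq_or_ne j i with rfl | h
    · simp [ha]
    · simp [h]
  rw [numGe, numGe, this, card_erase_add_one (by simpa using hci)]

theorem numGe_eq_card_filter_image [DecidableEq ι] {m : ℕ} {c : ι → Fin n}
    (hc : Injective c) :
    numGe m c = ((univ.image c).filter fun j : Fin n => m ≤ (j : ℕ)).card := by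
  rw [numGe, filter_image, card_image_of_injective _ hc]

theorem exists_lt_notMem_range_of_numGe_pos {k : ℕ} (hkn : k ≤ n) {c : Fin k → Fin n}
    (hc : 0 < numGe k c) : ∃ b : Fin n, (b : ℕ) < k ∧ b ∉ Set.range c := by
  -- only `k - numGe k c < k` entries of `c` lie in `{0, …, k - 1}`
  by_contra! h
  have hsub : univ.image (Fin.castLE hkn) ⊆ ({i | (c i : ℕ) < k} : Finset (Fin k)).image c := by
    intro b hb
    obtain ⟨i, -, rfl⟩ := mem_image.mp hb
    obtain ⟨j, hj⟩ := h (Fin.castLE hkn i) i.isLt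
    exact mem_image.mpr ⟨j, by simp [hj], hj⟩
  have := (card_le_card hsub).trans card_image_le
  rw [card_image_of_injective _ (Fin.castLE_injective hkn), card_univ, Fintype.card_fin] at this
  have hsplit := card_filter_add_card_filter_not (s := univ) (fun i : Fin k => k ≤ (c i : ℕ))
  simp only [not_le, card_univ, Fintype.card_fin] at hsplit
  rw [numGe] at hc
  omega

theorem range_eq_range_castLE_of_numGe_eq_zero {k : ℕ} (hkn : k ≤ n) {c : Fin k → Fin n}
    (hc : Injective c) (h : numGe k c = 0) : Set.range c = Set.range (Fin.castLE hkn) := by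
  have hlt : ∀ i, (c i : ℕ) < k := fun i => by
    by_contra! hi
    exact (card_pos.mpr ⟨i, by simpa using hi⟩).ne' h
  have hsub : univ.image c ⊆ univ.image (Fin.castLE hkn) := fun b hb => by
    obtain ⟨i, -, rfl⟩ := mem_image.mp hb
    exact mem_image.mpr ⟨⟨c i, hlt i⟩, mem_univ _, rfl⟩
  have := eq_of_subset_of_card_le hsub (by
    rw [card_image_of_injective _ hc, card_image_of_injective _ (Fin.castLE_injective hkn)])
  simpa [Fintype.coe_image_univ] using congrArg ((↑) : Finset (Fin n) → Set (Fin n)) this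

end numGe

section stdWedge

variable {n k : ℕ}

noncomputable def stdWedge (n k : ℕ) (c : Fin k → Fin n) : ⋀[ℂ]^k (Fin n → ℂ) :=
  wedge n k fun i => Pi.single (c i) 1

theorem stdWedge_eq_ιMulti (c : Fin k → Fin n) :
    stdWedge n k c = exteriorPower.ιMulti ℂ k ((fun j => Pi.single j 1) ∘ c) :=
  rfl

theorem derivationEnd_mem_lowerTriangularDerivations {X : Matrix (Fin n) (Fin n) ℂ}
    (hX : ∀ i j : Fin n, i ≤ j → X i j = 0) :
    exteriorPower.derivationEnd k (Matrix.toLin' X) ∈ lowerTriangularDerivations n k :=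
  ⟨X, hX, exteriorPower.derivationEnd_ιMulti _⟩

theorem derivationEnd_single_stdWedge_update {c : Fin k → Fin n} {i : Fin k} {b : Fin n}
    (hb : b ∉ Set.range c) :
    exteriorPower.derivationEnd k (Matrix.toLin' (Matrix.single (c i) b 1))
      (stdWedge n k (update c i b)) = stdWedge n k c := by
  rw [stdWedge_eq_ιMulti, stdWedge_eq_ιMulti,
    exteriorPower.derivationEnd_ιMulti_of_apply_eq_zero (i := i)]
  · congr 1
    ext j : 1
    rcases eq_or_ne j i with rfl | hj
    · simp [-Matrix.mulVec_single, Matrix.single_mulVec_eq]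
    · simp [hj]
  · intro m hm
    have hbm : c m ≠ b := fun h => hb ⟨m, h⟩
    simp [-Matrix.mulVec_single, update_of_ne hm, Matrix.single_mulVec_eq, hbm.symm]

theorem stdWedge_mem_pbwFiltration (hkn : k ≤ n) {c : Fin k → Fin n} (hc : Injective c) :
    stdWedge n k c ∈ pbwFiltration (lowerTriangularDerivations n k)
      (stdWedge n k (Fin.castLE hkn)) (numGe k c) := by
  induction hd : numGe k c generalizing c with
  | zero =>
    rw [pbwFiltration_zero, stdWedge_eq_ιMulti, stdWedge_eq_ιMulti]
    exact (exteriorPower.ιMulti ℂ k).map_comp_mem_span_singleton_of_range_eq _ hc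
      (Fin.castLE_injective hkn) (range_eq_range_castLE_of_numGe_eq_zero hkn hc hd)
  | succ t ih =>
    have hpos : 0 < numGe k c := by omega
    obtain ⟨i, hi⟩ := card_pos.mp hpos
    replace hi : k ≤ (c i : ℕ) := by simpa using hi
    obtain ⟨b, hbk, hb⟩ := exists_lt_notMem_range_of_numGe_pos hkn hpos
    have hc' := hc.update_of_notMem_range i hb
    have hX : ∀ p q : Fin n, p ≤ q → Matrix.single (c i) b (1 : ℂ) p q = 0 := by
      refine fun p q hpq => Matrix.single_apply_of_ne _ _ _ _ _ ?_
      rintro ⟨rfl, rfl⟩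
      exact absurd (Fin.le_def.mp hpq) (by omega)
    rw [← derivationEnd_single_stdWedge_update (c := c) (i := i) hb]
    exact apply_mem_pbwFiltration_succ (derivationEnd_mem_lowerTriangularDerivations hX)
      (ih hc' (by have := numGe_update_add_one (a := b) hi hbk; omega))

noncomputable def stdWedgeSpan (n k s : ℕ) : Submodule ℂ (⋀[ℂ]^k (Fin n → ℂ)) :=
  Submodule.span ℂ (stdWedge n k '' {c | numGe k c ≤ s})

theorem stdWedgeSpan_mono (n k : ℕ) : Monotone (stdWedgeSpan n k) :=
  fun _ _ hst => Submodule.span_mono (Set.image_mono fun _ hc => le_trans hc hst)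

theorem apply_stdWedge_mem_stdWedgeSpan {T : Module.End ℂ (⋀[ℂ]^k (Fin n → ℂ))}
    (hT : T ∈ lowerTriangularDerivations n k) (c : Fin k → Fin n) :
    T (stdWedge n k c) ∈ stdWedgeSpan n k (numGe k c + 1) := by
  obtain ⟨X, -, hX⟩ := hT
  rw [stdWedge, hX]
  refine Submodule.sum_mem _ fun m _ => ?_
  change exteriorPower.ιMulti ℂ k _ ∈ _
  rw [pi_eq_sum_univ' (X.mulVec _), AlternatingMap.map_update_sum]
  refine Submodule.sum_mem _ fun a _ => ?_
  rw [AlternatingMap.map_update_smul]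
  refine Submodule.smul_mem _ _
    (Submodule.subset_span ⟨update c m a, numGe_update_le k c m a, ?_⟩)
  rw [stdWedge_eq_ιMulti, comp_update]
  rfl

theorem pbwFiltration_le_stdWedgeSpan (hkn : k ≤ n) (s : ℕ) :
    pbwFiltration (lowerTriangularDerivations n k) (stdWedge n k (Fin.castLE hkn)) s ≤
      stdWedgeSpan n k s := by
  refine pbwFiltration_le (stdWedgeSpan_mono n k) (Submodule.subset_span ⟨_, ?_, rfl⟩)
    (fun T hT s => ?_) s
  · simp [numGe]
  · refine Submodule.span_le.mpr (Set.image_subset_iff.mpr fun c hc => ?_)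
    exact stdWedgeSpan_mono n k (Nat.succ_le_succ hc) (apply_stdWedge_mem_stdWedgeSpan hT c)

theorem stdWedge_orderIsoOfFin_notMem_stdWedgeSpan {J : Finset (Fin n)} (hJ : J.card = k) {s : ℕ}
    (hs : s < (J.filter fun j : Fin n => k ≤ (j : ℕ)).card) :
    stdWedge n k (fun i => J.orderIsoOfFin hJ i) ∉ stdWedgeSpan n k s := by
  set b := Pi.basisFun ℂ (Fin n)
  have hb : ∀ c : Fin k → Fin n, stdWedge n k c = exteriorPower.ιMulti ℂ k (b ∘ c) := by
    intro c
    rw [stdWedge_eq_ιMulti]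
    congr 1
    ext1 i
    simp [b]
  set φ := exteriorPower.ιMultiDual ℂ k b ⟨J, hJ⟩
  have hφ : stdWedgeSpan n k s ≤ LinearMap.ker φ := by
    refine Submodule.span_le.mpr (Set.image_subset_iff.mpr fun c hc => ?_)
    simp only [Set.mem_preimage, SetLike.mem_coe, LinearMap.mem_ker, hb]
    refine exteriorPower.ιMultiDual_apply_ιMulti_comp_eq_zero b _ fun himg => ?_
    have hinj : Injective c := by
      rw [← Set.injOn_univ, ← coe_univ, ← card_image_iff, himg]
      simp [hJ]
    rw [Set.mem_ofPred, numGe_eq_card_filter_image hinj, himg] at hc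
    exact absurd hc (by simpa using hs)
  intro h
  rw [hb] at h
  exact one_ne_zero ((exteriorPower.ιMultiDual_apply_diag ℂ k b ⟨J, hJ⟩).symm.trans (hφ h))

end stdWedge

theorem pbw_degree_fundamental_sln_general (n k : ℕ) (hkn : k ≤ n)
    (J : Finset (Fin n)) (hJ : J.card = k) :
    IsLeast {s : ℕ |
        wedge n k (fun i => Pi.single ((J.orderIsoOfFin hJ i : Fin n)) 1) ∈
          pbwFiltration (lowerTriangularDerivations n k)
            (wedge n k (fun i => Pi.single (Fin.castLE hkn i) 1)) s}
      ((J.filter (fun j : Fin n => k ≤ (j : ℕ))).card) := by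
  have hc : Injective fun i => (J.orderIsoOfFin hJ i : Fin n) :=
    Subtype.val_injective.comp (J.orderIsoOfFin hJ).injective
  have hd : numGe k (fun i => (J.orderIsoOfFin hJ i : Fin n)) =
      (J.filter fun j : Fin n => k ≤ (j : ℕ)).card := by
    rw [numGe_eq_card_filter_image hc]
    simp only [coe_orderIsoOfFin_apply, image_orderEmbOfFin_univ]
  refine ⟨hd ▸ stdWedge_mem_pbwFiltration hkn hc, fun s hs => ?_⟩
  by_contra! hlt
  exact stdWedge_orderIsoOfFin_notMem_stdWedgeSpan hJ hlt (pbwFiltration_le_stdWedgeSpan hkn s hs)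

/-- PBW degrees of the standard basis of the fundamental `𝔰𝔩_n`-module `⋀^k ℂ^n`:
for a `k`-element subset `J = {j₁ < ⋯ < j_k}` of `{1,…,n}`, the vector
`e_J = e_{j₁} ∧ ⋯ ∧ e_{j_k}` lies in `F_d` but not in `F_{d-1}` of the PBW
filtration generated by `v = e₁ ∧ ⋯ ∧ e_k`, where `d = #{j ∈ J : j > k}`
(in the 0-based indexing used here, `j > k` reads `k ≤ j`). -/
theorem pbw_degree_fundamental_sln (n k : ℕ) (hn : 2 ≤ n) (hk1 : 1 ≤ k) (hkn : k ≤ n)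
    (J : Finset (Fin n)) (hJ : J.card = k) :
    IsLeast {s : ℕ |
        wedge n k (fun i => Pi.single ((J.orderIsoOfFin hJ i : Fin n)) 1) ∈
          pbwFiltration (lowerTriangularDerivations n k)
            (wedge n k (fun i => Pi.single (Fin.castLE hkn i) 1)) s}
      ((J.filter (fun j : Fin n => k ≤ (j : ℕ))).card) :=
  pbw_degree_fundamental_sln_general n k hkn J hJ
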